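/- arXiv:1912.02394 — 2 statements merged into one kernel-verified Lean document; each statement's English description precedes it below -/
import Mathlib

section
/- Let f : (Fin m → Bool) → Bool with structure matrix L_f, and let k : Fin m. Reindex the columns of L_f along the bijection (Fin m → Bool) ≃ Bool × ({j : Fin m // j ≠ k} → Bool) given by s ↦ (s k, fun j => s j.val); this reindexing realizes the paper's right-multiplication of L_f by the swap matrix W[2, 2^{k-1}]. Then k is a functional variable of f and every variable j ≠ k is nonfunctional for f, if and only if the reindexed matrix equals Â ⊗ₖ 𝟙ᵀ, where 𝟙ᵀ is the all-ones row vector indexed by ({j : Fin m // j ≠ k} → Bool) (of length 2^{m-1}), Â is either the 2×2 identity matrix I₂ or the antidiagonal permutation matrix !![0,1;1,0], ⊗ₖ is the Kronecker product, and Bool is identified with Fin 2 by true ↦ 0, false ↦ 1. -/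
/-- Variable `k` is functional for the Boolean function `f`. -/
def Functional {m : ℕ} (f : (Fin m → Bool) → Bool) (k : Fin m) : Prop :=
  ∃ x : Fin m → Bool, f (Function.update x k (!(x k))) ≠ f x

/-- The identification of `Bool` with `Fin 2`: `true ↦ 0`, `false ↦ 1`. -/
def bIdx (b : Bool) : Fin 2 := if b then 0 else 1

/-- The structure matrix of a Boolean function `f`: its column indexed by an
assignment `s` is the vector encoding of `f s` (`true ↦ (1,0)ᵀ`, `false ↦ (0,1)ᵀ`). -/
def structMat {m : ℕ} (f : (Fin m → Bool) → Bool) : Matrix (Fin 2) (Fin m → Bool) ℝ :=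
  Matrix.of fun i s => if i = bIdx (f s) then 1 else 0

/-- Inverse of the reindexing bijection `(Fin m → Bool) ≃ Bool × ({j // j ≠ k} → Bool)`,
`s ↦ (s k, fun j => s j.val)`. -/
def recon {m : ℕ} (k : Fin m) (c : Bool × ({j : Fin m // j ≠ k} → Bool)) : Fin m → Bool :=
  fun j => if h : j = k then c.1 else c.2 ⟨j, h⟩

/-- The all-ones row vector indexed by `{j : Fin m // j ≠ k} → Bool` (length `2^(m-1)`). -/
def onesRow {m : ℕ} (k : Fin m) : Matrix (Fin 1) ({j : Fin m // j ≠ k} → Bool) ℝ :=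
  Matrix.of fun _ _ => 1

lemma bIdx_inj : Function.Injective bIdx := by
  intro a b h; cases a <;> cases b <;> simp_all [bIdx]

lemma recon_apply_self {m : ℕ} (k : Fin m) (c : Bool × ({j : Fin m // j ≠ k} → Bool)) :
    recon k c k = c.1 := by simp [recon]

lemma recon_split {m : ℕ} (k : Fin m) (s : Fin m → Bool) :
    recon k (s k, fun j => s j.val) = s := by
  funext j; by_cases h : j = k <;> simp [recon, h]

lemma indep {m : ℕ} (f : (Fin m → Bool) → Bool) (k : Fin m)
    (h : ∀ j : Fin m, j ≠ k → ¬ Functional f j) :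
    ∀ (s t : Fin m → Bool), s k = t k → f s = f t := by
  suffices H : ∀ n (s t : Fin m → Bool), s k = t k →
      (Finset.univ.filter (fun j => s j ≠ t j)).card ≤ n → f s = f t by
    intro s t hk
    exact H _ s t hk le_rfl
  intro n
  induction n with
  | zero =>
    intro s t hk hc
    have : ∀ j, s j = t j := by
      intro j
      by_contra hj
      have hmem : j ∈ Finset.univ.filter (fun j => s j ≠ t j) := by simp [hj]
      have := Finset.card_pos.mpr ⟨j, hmem⟩
      omega
    exact congrArg f (funext this)
  | succ n ih =>
    intro s t hk hc
    by_cases hst : ∀ j, s j = t j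
    · exact congrArg f (funext hst)
    · push_neg at hst
      obtain ⟨j, hj⟩ := hst
      have hjk : j ≠ k := by rintro rfl; exact hj hk
      set s' := Function.update s j (!(s j)) with hs'
      have h1 : f s' = f s := by
        by_contra h'; exact h j hjk ⟨s, h'⟩
      have hsj : s' j = t j := by
        cases hb : s j <;> cases ht : t j <;> simp_all [hs']
      have hsub : (Finset.univ.filter (fun i => s' i ≠ t i)) ⊆
          (Finset.univ.filter (fun i => s i ≠ t i)).erase j := by
        intro i hi
        simp only [Finset.mem_filter, Finset.mem_univ, true_and] at hi
        rw [Finset.mem_erase]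
        have hij : i ≠ j := by rintro rfl; exact hi hsj
        refine ⟨hij, ?_⟩
        simp only [Finset.mem_filter, Finset.mem_univ, true_and]
        rwa [hs', Function.update_of_ne hij] at hi
      have hjmem : j ∈ Finset.univ.filter (fun i => s i ≠ t i) := by simp [hj]
      have hcard : (Finset.univ.filter (fun i => s' i ≠ t i)).card ≤ n := by
        have := Finset.card_le_card hsub
        rw [Finset.card_erase_of_mem hjmem] at this
        omega
      have hk' : s' k = t k := by rw [hs', Function.update_of_ne (Ne.symm hjk)]; exact hk
      rw [← h1]
      exact ih s' t hk' hcard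

lemma char {m : ℕ} (f : (Fin m → Bool) → Bool) (k : Fin m) :
    (Functional f k ∧ ∀ j : Fin m, j ≠ k → ¬ Functional f j) ↔
    (∀ s, f s = s k) ∨ (∀ s, f s = !(s k)) := by
  constructor
  · rintro ⟨⟨x, hx⟩, h⟩
    have hind := indep f k h
    have hfs : ∀ s : Fin m → Bool, f s = f (Function.update x k (s k)) := by
      intro s
      apply hind
      simp
    have hne : f (Function.update x k (!(x k))) ≠ f (Function.update x k (x k)) := by
      rwa [Function.update_eq_self]
    have hgne : f (Function.update x k true) ≠ f (Function.update x k false) := by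
      cases hb : x k
      · rw [hb] at hne; simpa using hne
      · rw [hb] at hne; exact fun e => hne (by simpa using e.symm)
    cases hgt : f (Function.update x k true) <;> cases hgf : f (Function.update x k false)
    · exact absurd (hgt.trans hgf.symm) hgne
    · right
      intro s
      rw [hfs s]
      cases hs : s k
      · rw [hgf]; rfl
      · rw [hgt]; rfl
    · left
      intro s
      rw [hfs s]
      cases hs : s k
      · rw [hgf]
      · rw [hgt]
    · exact absurd (hgt.trans hgf.symm) hgne
  · intro h
    constructor
    · refine ⟨fun _ => false, ?_⟩
      rcases h with h | h <;> simp [h, Function.update_self]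
    · rintro j hj ⟨x, hx⟩
      apply hx
      rcases h with h | h <;>
        simp [h, Function.update_of_ne (Ne.symm hj)]

/-- `k` is the unique functional variable of `f` iff the structure matrix of `f`,
reindexed along `(Fin m → Bool) ≃ Bool × ({j // j ≠ k} → Bool)` (realizing the
right-multiplication by the swap matrix `W[2,2^{k-1}]`), equals `Ahat ⊗ₖ 𝟙ᵀ` with
`Ahat = I₂` or `Ahat` the antidiagonal permutation matrix. -/
theorem unique_functional_iff_structMat_kronecker (m : ℕ)
    (f : (Fin m → Bool) → Bool) (k : Fin m) :
    (Functional f k ∧ ∀ j : Fin m, j ≠ k → ¬ Functional f j) ↔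
    ∃ Ahat : Matrix (Fin 2) (Fin 2) ℝ,
      (Ahat = 1 ∨ Ahat = !![0, 1; 1, 0]) ∧
      (Matrix.of fun (i : Fin 2) (c : Bool × ({j : Fin m // j ≠ k} → Bool)) =>
          structMat f i (recon k c)) =
        (Matrix.kroneckerMap (· * ·) Ahat (onesRow k)).submatrix
          (fun i : Fin 2 => (i, (0 : Fin 1)))
          (fun c : Bool × ({j : Fin m // j ≠ k} → Bool) => (bIdx c.1, c.2)) := by
  rw [char]
  constructor
  · rintro (h | h)
    · refine ⟨1, Or.inl rfl, ?_⟩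
      ext i c
      obtain ⟨b, r⟩ := c
      simp [structMat, h, recon_apply_self, onesRow, Matrix.one_apply,
        Matrix.kroneckerMap_apply]
    · refine ⟨!![0,1;1,0], Or.inr rfl, ?_⟩
      ext i c
      obtain ⟨b, r⟩ := c
      fin_cases i <;> cases b <;>
        simp [structMat, h, recon_apply_self, onesRow, bIdx,
          Matrix.kroneckerMap_apply]
  · rintro ⟨Ahat, (rfl | rfl), heq⟩
    · left
      intro s
      have h2 := (Matrix.ext_iff.2 heq) (bIdx (s k)) (s k, fun j => s j.val)
      simp only [Matrix.of_apply, structMat, Matrix.submatrix_apply,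
        Matrix.kroneckerMap_apply, onesRow, mul_one, Matrix.one_apply_eq,
        recon_split] at h2
      by_contra hne
      rw [if_neg (fun e => hne (bIdx_inj e).symm)] at h2
      exact zero_ne_one h2
    · right
      intro s
      have h2 := (Matrix.ext_iff.2 heq) (bIdx (!(s k))) (s k, fun j => s j.val)
      simp only [Matrix.of_apply, structMat, Matrix.submatrix_apply,
        Matrix.kroneckerMap_apply, onesRow, mul_one, recon_split] at h2
      by_contra hne
      rw [if_neg (fun e => hne (bIdx_inj e).symm)] at h2
      cases hsk : s k <;> rw [hsk] at h2 <;> simp [bIdx] at h2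
end

section
/- Let f : (Fin m → Bool) → Bool and k : Fin m. Then k is functional for f and every variable j ≠ k is nonfunctional for f, if and only if either (∀ x, f x = x k) or (∀ x, f x = !(x k)). -/
lemma update_invariant {m : ℕ} (f : (Fin m → Bool) → Bool) (j : Fin m)
    (h : ¬ Functional f j) (x : Fin m → Bool) (b : Bool) :
    f (Function.update x j b) = f x := by
  unfold Functional at h
  push_neg at h
  rcases Bool.eq_or_eq_not b (x j) with hb | hb
  · subst hb; rw [Function.update_eq_self]
  · subst hb; exact h x

lemma invariant_aux {m : ℕ} (f : (Fin m → Bool) → Bool) (k : Fin m)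
    (h : ∀ j : Fin m, j ≠ k → ¬ Functional f j) :
    ∀ (n : ℕ) (x y : Fin m → Bool), x k = y k →
      (Finset.univ.filter (fun i => x i ≠ y i)).card ≤ n → f x = f y := by
  intro n
  induction n with
  | zero =>
    intro x y hk hc
    have hx : x = y := by
      funext i
      by_contra hne
      have hi : i ∈ Finset.univ.filter (fun i => x i ≠ y i) := by
        simp [hne]
      have := Finset.card_eq_zero.mp (Nat.le_zero.mp hc)
      rw [this] at hi
      exact absurd hi (Finset.notMem_empty i)
    rw [hx]
  | succ n ih =>
    intro x y hk hc
    by_cases hxy : x = y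
    · rw [hxy]
    · have : ∃ j, x j ≠ y j := by
        by_contra hall
        push_neg at hall
        exact hxy (funext hall)
      obtain ⟨j, hj⟩ := this
      have hjk : j ≠ k := fun hh => hj (hh ▸ hk)
      have h1 : f (Function.update x j (y j)) = f x :=
        update_invariant f j (h j hjk) x (y j)
      have h2 : f (Function.update x j (y j)) = f y := by
        apply ih
        · rw [Function.update_of_ne (Ne.symm hjk)]; exact hk
        · have hsub : (Finset.univ.filter
              (fun i => Function.update x j (y j) i ≠ y i)) ⊆
              (Finset.univ.filter (fun i => x i ≠ y i)).erase j := by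
            intro i hi
            simp only [Finset.mem_filter, Finset.mem_univ, true_and] at hi
            rcases eq_or_ne i j with rfl | hij
            · rw [Function.update_self] at hi; exact absurd rfl hi
            · rw [Function.update_of_ne hij] at hi
              exact Finset.mem_erase.mpr ⟨hij, by simp [hi]⟩
          apply Nat.lt_succ_iff.mp
          calc (Finset.univ.filter
              (fun i => Function.update x j (y j) i ≠ y i)).card
              ≤ ((Finset.univ.filter (fun i => x i ≠ y i)).erase j).card :=
                Finset.card_le_card hsub
            _ < (Finset.univ.filter (fun i => x i ≠ y i)).card := by
                apply Finset.card_erase_lt_of_mem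
                simp [hj]
            _ ≤ n + 1 := hc
      rw [← h1, h2]

lemma invariant {m : ℕ} (f : (Fin m → Bool) → Bool) (k : Fin m)
    (h : ∀ j : Fin m, j ≠ k → ¬ Functional f j)
    (x y : Fin m → Bool) (hk : x k = y k) : f x = f y :=
  invariant_aux f k h _ x y hk le_rfl

/-- `k` is the unique functional variable of `f` iff `f` is either the projection
onto coordinate `k` or its negation. -/
theorem unique_functional_iff_proj_or_neg (m : ℕ)
    (f : (Fin m → Bool) → Bool) (k : Fin m) :
    (Functional f k ∧ ∀ j : Fin m, j ≠ k → ¬ Functional f j) ↔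
    ((∀ x : Fin m → Bool, f x = x k) ∨ (∀ x : Fin m → Bool, f x = !(x k))) := by
  constructor
  · rintro ⟨⟨x0, hx0⟩, hrest⟩
    have hconst : ∀ x : Fin m → Bool, f x = f (fun _ => x k) := by
      intro x
      exact invariant f k hrest x _ rfl
    have hne : f (fun _ => true) ≠ f (fun _ => false) := by
      have h1 : f (Function.update x0 k (!(x0 k))) = f (fun _ => !(x0 k)) := by
        rw [hconst]; simp
      have h2 : f x0 = f (fun _ => x0 k) := hconst x0
      rw [h1, h2] at hx0
      cases hx : x0 k <;> simp [hx] at hx0 <;> [exact hx0; exact Ne.symm hx0]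
    cases ht : f (fun _ => true)
    · right
      intro x
      rw [hconst x]
      cases hx : x k
      · have : f (fun _ => false) = true := by
          cases hf : f (fun _ => false)
          · rw [ht, hf] at hne; exact absurd rfl hne
          · rfl
        simpa using this
      · simpa using ht
    · left
      intro x
      rw [hconst x]
      cases hx : x k
      · have : f (fun _ => false) = false := by
          cases hf : f (fun _ => false)
          · rfl
          · rw [ht, hf] at hne; exact absurd rfl hne
        simpa using this
      · simpa using ht
  · intro h
    constructor
    · rcases h with h | h
      · exact ⟨fun _ => false, by simp [h]⟩
      · exact ⟨fun _ => false, by simp [h]⟩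
    · intro j hjk ⟨x, hx⟩
      have hk : Function.update x j (!(x j)) k = x k :=
        Function.update_of_ne (Ne.symm hjk) _ _
      rcases h with h | h <;> rw [h, h, hk] at hx <;> exact hx rfl
end
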